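/- Strict cut-off property: if g(χ_LP) > 0 and χ̂ is the line-search point with g(χ̂) = 0 between χ_cp (with g(χ_cp) < 0) and χ_LP, then the tangent cut constructed at χ̂ is violated by χ_LP, i.e. Σᵢ (2·cᵢ·p̂ᵢ·p_LP,ᵢ − cᵢ·p̂ᵢ²) − η_LP > 0. -/
import Mathlib


theorem tangent_cut_cuts_off_LP (n : ℕ) (c : Fin n → ℝ) (hc : ∀ i, 0 ≤ c i)
    (g : (Fin n → ℝ) × ℝ → ℝ)
    (hg : ∀ χ, g χ = ∑ i, c i * (χ.1 i) ^ 2 - χ.2)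
    (χcp χLP : (Fin n → ℝ) × ℝ) (l : ℝ) (hl : l ∈ Set.Ioo (0 : ℝ) 1)
    (χhat : (Fin n → ℝ) × ℝ) (hχhat : χhat = l • χcp + (1 - l) • χLP)
    (hcp : g χcp < 0) (hLP : 0 < g χLP) (hhat : g χhat = 0) :
    0 < ∑ i, (2 * c i * χhat.1 i * χLP.1 i - c i * (χhat.1 i) ^ 2) - χLP.2 := by
  obtain ⟨hl0, hl1⟩ := hl
  have h1 : ∀ i, χhat.1 i = l * χcp.1 i + (1 - l) * χLP.1 i := by
    intro i; rw [hχhat]; simp [Prod.fst_add, smul_eq_mul]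
  have h2 : χhat.2 = l * χcp.2 + (1 - l) * χLP.2 := by
    rw [hχhat]; simp [Prod.snd_add, smul_eq_mul]
  set Scp := ∑ i, (2 * c i * χhat.1 i * χcp.1 i - c i * (χhat.1 i) ^ 2) with hScp
  set SLP := ∑ i, (2 * c i * χhat.1 i * χLP.1 i - c i * (χhat.1 i) ^ 2) with hSLP
  -- affinity: l*Scp + (1-l)*SLP = ∑ c p̂²
  have key : l * Scp + (1 - l) * SLP = ∑ i, c i * (χhat.1 i) ^ 2 := by
    rw [hScp, hSLP, Finset.mul_sum, Finset.mul_sum, ← Finset.sum_add_distrib]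
    refine Finset.sum_congr rfl fun i _ => by rw [h1 i]; ring
  have hghat : (∑ i, c i * (χhat.1 i) ^ 2) - χhat.2 = 0 := by rw [← hg]; exact hhat
  -- convexity at χcp
  have hconv : Scp - χcp.2 ≤ g χcp := by
    rw [hg]
    have hge : 0 ≤ ∑ i, c i * (χcp.1 i - χhat.1 i) ^ 2 :=
      Finset.sum_nonneg fun i _ => mul_nonneg (hc i) (sq_nonneg _)
    have heq : (∑ i, c i * (χcp.1 i) ^ 2) - Scp = ∑ i, c i * (χcp.1 i - χhat.1 i) ^ 2 := by
      rw [hScp, ← Finset.sum_sub_distrib]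
      exact Finset.sum_congr rfl fun i _ => by ring
    linarith
  have haff : l * (Scp - χcp.2) + (1 - l) * (SLP - χLP.2) = 0 := by
    have : l * (Scp - χcp.2) + (1 - l) * (SLP - χLP.2)
        = l * Scp + (1 - l) * SLP - (l * χcp.2 + (1 - l) * χLP.2) := by ring
    rw [this, key, ← h2]; exact hghat
  nlinarith [mul_pos hl0 (neg_pos.2 (lt_of_le_of_lt hconv hcp))]
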